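/- Let θ > 0, a > 0, Δ > 0, μ ∈ ℝ and K ∈ ℕ, and let W₀, …, W_{K−1} be independent centered Gaussian random variables, each with variance Δ. For x ∈ ℝ define the Euler–Maruyama iterates Z₀(x) := x and Z_{j+1}(x) := Z_j(x) − Δ·θ·(Z_j(x) − μ) + √(2θa(Z_j(x)² + 1))·W_j for j = 0, …, K−1. Then for every convex function g : ℝ → ℝ of polynomial growth, the map x ↦ E[g(Z_K(x))] is a convex function of x ∈ ℝ. -/

import Mathlib

/-!
With `f(x) = x - Δθ(x - μ)`, `s(x) = √(2θa(x² + 1))` and `W ~ N(0, Δ)`, let `T` be the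
transition operator `(T g)(x) = E g(f(x) + s(x) W)`. Since `Z_j` is a function of
`W_0, …, W_{j-1}`, it is independent of `W_j`, so `E g(Z_{j+1}) = E (T g)(Z_j)` and
`E g(Z_K(x)) = (T^K g)(x)`. It remains to see that `T` preserves convexity. As `W` is symmetric,
`(α, β) ↦ E g(α + β W)` is jointly convex and even in `β`, hence nondecreasing for `β ≥ 0`; since
`f` is affine and `s ≥ 0` is convex, `T g` is convex. Polynomial growth, which `T` preserves,
together with the Gaussian moments of all orders keeps every expectation finite.
-/

open MeasureTheory ProbabilityTheory Set Function

def HasPolyGrowth (n : ℕ) (g : ℝ → ℝ) : Prop :=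
  ∃ C, 0 ≤ C ∧ ∀ z, |g z| ≤ C * (1 + |z|) ^ n

section PolyGrowth

variable {g : ℝ → ℝ} {n : ℕ}

theorem HasPolyGrowth.of_continuous_of_one_le_abs (hg : Continuous g) {C : ℝ}
    (h : ∀ z, 1 ≤ |z| → |g z| ≤ C * (1 + |z|) ^ n) : HasPolyGrowth n g := by
  obtain ⟨B, hB⟩ := isCompact_Icc.exists_bound_of_continuousOn
    (hg.continuousOn (s := Icc (-1 : ℝ) 1))
  refine ⟨max C 0 + max B 0, by positivity, fun z => ?_⟩
  have hpow : 1 ≤ (1 + |z|) ^ n := one_le_pow₀ (by linarith [abs_nonneg z])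
  rcases le_or_gt |z| 1 with hz | hz
  · have hgz : |g z| ≤ B := hB z (abs_le.mp hz)
    nlinarith [le_max_left B 0, le_max_right B 0, le_max_right C 0]
  · nlinarith [h z hz.le, le_max_left C 0, le_max_right B 0]

theorem hasPolyGrowth_of_abs_le_rpow (hg : Continuous g) {C m : ℝ}
    (h : ∀ z, |g z| ≤ C * (1 + |z| ^ m)) : HasPolyGrowth ⌈m⌉₊ g := by
  refine .of_continuous_of_one_le_abs hg (C := 2 * C) fun z hz => ?_
  have hzm : |z| ^ m ≤ (1 + |z|) ^ ⌈m⌉₊ :=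
    calc |z| ^ m ≤ |z| ^ (⌈m⌉₊ : ℝ) := Real.rpow_le_rpow_of_exponent_le hz (Nat.le_ceil m)
      _ = |z| ^ ⌈m⌉₊ := Real.rpow_natCast _ _
      _ ≤ (1 + |z|) ^ ⌈m⌉₊ := pow_le_pow_left₀ (abs_nonneg z) (by linarith) _
  have hC : 0 ≤ C := by
    have hgz := (abs_nonneg _).trans (h z)
    nlinarith [Real.rpow_nonneg (abs_nonneg z) m]
  nlinarith [h z, one_le_pow₀ (M₀ := ℝ) (n := ⌈m⌉₊) (by linarith : (1 : ℝ) ≤ 1 + |z|)]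

theorem hasPolyGrowth_one_add_abs_pow (n : ℕ) : HasPolyGrowth n fun z => (1 + |z|) ^ n :=
  ⟨1, zero_le_one, fun z => by rw [one_mul, abs_of_nonneg (by positivity)]⟩

theorem AffineMap.hasPolyGrowth_one (f : ℝ →ᵃ[ℝ] ℝ) : HasPolyGrowth 1 f := by
  refine ⟨|f.linear 1| + |f 0|, by positivity, fun z => ?_⟩
  have hf : f z = z * f.linear 1 + f 0 := by
    rw [show f z = f.linear z + f 0 by simpa using congrFun f.decomp z, ← smul_eq_mul,
      ← f.linear.map_smul, smul_eq_mul, mul_one]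
  rw [hf, pow_one]
  calc |z * f.linear 1 + f 0| ≤ |z| * |f.linear 1| + |f 0| := by
        rw [← abs_mul]; exact abs_add_le _ _
    _ ≤ (|f.linear 1| + |f 0|) * (1 + |z|) := by
        nlinarith [abs_nonneg z, abs_nonneg (f.linear 1), abs_nonneg (f 0)]

theorem one_add_abs_add_mul_le (α β w : ℝ) :
    1 + |α + β * w| ≤ (1 + |α| + |β|) * (1 + |w|) := by
  have h := abs_add_le α (β * w)
  rw [abs_mul] at h
  nlinarith [abs_nonneg α, abs_nonneg β, abs_nonneg w]

theorem HasPolyGrowth.abs_comp_add_mul_le (hg : HasPolyGrowth n g) :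
    ∃ C, 0 ≤ C ∧ ∀ α β w, |g (α + β * w)| ≤ C * ((1 + |α| + |β|) ^ n * (1 + |w|) ^ n) := by
  obtain ⟨C, hC, hCg⟩ := hg
  refine ⟨C, hC, fun α β w => (hCg _).trans ?_⟩
  rw [← mul_pow]
  gcongr
  exact one_add_abs_add_mul_le α β w

theorem HasPolyGrowth.exists_one_add_abs_add_abs_le {f s : ℝ → ℝ} (hf : HasPolyGrowth 1 f)
    (hs : HasPolyGrowth 1 s) : ∃ A, 0 ≤ A ∧ ∀ z, 1 + |f z| + |s z| ≤ A * (1 + |z|) := by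
  obtain ⟨B, hB, hBf⟩ := hf
  obtain ⟨D, hD, hDs⟩ := hs
  refine ⟨1 + B + D, by positivity, fun z => ?_⟩
  have hfz := hBf z
  have hsz := hDs z
  rw [pow_one] at hfz hsz
  nlinarith [abs_nonneg z]

end PolyGrowth

theorem integrable_one_add_abs_pow_gaussianReal (m : ℝ) (v : NNReal) (n : ℕ) :
    Integrable (fun w => (1 + |w|) ^ n) (gaussianReal m v) := by
  have hid : MemLp (fun w : ℝ => ‖w‖) n (gaussianReal m v) :=
    (memLp_id_gaussianReal' n (ENNReal.natCast_ne_top n)).norm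
  have hone : MemLp (fun _ : ℝ => (1 : ℝ)) n (gaussianReal m v) := memLp_const 1
  refine (hone.add hid).integrable_norm_pow'.congr (ae_of_all _ fun w => ?_)
  simp only [Pi.add_apply, Real.norm_eq_abs]
  rw [abs_of_nonneg (by positivity)]

instance isNegInvariant_gaussianReal_zero (v : NNReal) : (gaussianReal 0 v).IsNegInvariant :=
  ⟨gaussianReal_map_neg.trans (by rw [neg_zero])⟩

-- `√(z² + 1)` is the Euclidean norm of `(z, 1)`, an affine function of `z`.
theorem convexOn_sqrt_sq_add_one : ConvexOn ℝ univ fun z : ℝ => √(z ^ 2 + 1) := by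
  let L : ℝ →ᵃ[ℝ] WithLp 2 (ℝ × ℝ) :=
    AffineMap.lineMap (WithLp.toLp 2 ((0 : ℝ), (1 : ℝ))) (WithLp.toLp 2 ((1 : ℝ), (1 : ℝ)))
  have h := (convexOn_norm (E := WithLp 2 (ℝ × ℝ)) convex_univ).comp_affineMap L
  rw [preimage_univ] at h
  exact h.congr fun z _ => by simp [L, WithLp.prod_norm_eq_of_L2, AffineMap.lineMap_apply]

theorem convexOn_sqrt_mul_sq_add_one {c : ℝ} (hc : 0 ≤ c) :
    ConvexOn ℝ univ fun z : ℝ => √(c * (z ^ 2 + 1)) := by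
  simp_rw [Real.sqrt_mul hc]
  exact convexOn_sqrt_sq_add_one.smul (Real.sqrt_nonneg c)

theorem hasPolyGrowth_sqrt_mul_sq_add_one {c : ℝ} (hc : 0 ≤ c) :
    HasPolyGrowth 1 fun z : ℝ => √(c * (z ^ 2 + 1)) := by
  refine ⟨√c, Real.sqrt_nonneg c, fun z => ?_⟩
  rw [abs_of_nonneg (Real.sqrt_nonneg _), Real.sqrt_mul hc, pow_one]
  gcongr
  rw [Real.sqrt_le_iff]
  constructor
  · positivity
  · nlinarith [abs_nonneg z, sq_abs z]

theorem ConvexOn.continuous_of_univ {g : ℝ → ℝ} (hg : ConvexOn ℝ univ g) : Continuous g :=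
  continuousOn_univ.mp (hg.continuousOn isOpen_univ)

theorem ConvexOn.monotoneOn_of_even {h : ℝ → ℝ} (hh : ConvexOn ℝ univ h)
    (he : Function.Even h) : MonotoneOn h (Ici 0) := by
  intro β hβ β' _ hle
  have hmem : β ∈ segment ℝ (-β') β' := by
    rw [segment_eq_Icc (by linarith [mem_Ici.mp hβ])]
    exact ⟨by linarith [mem_Ici.mp hβ], hle⟩
  simpa [he β'] using hh.le_on_segment (mem_univ _) (mem_univ _) hmem

theorem convexOn_integral {E α : Type*} [AddCommGroup E] [Module ℝ E] [MeasurableSpace α]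
    {ν : Measure α} {S : Set E} {F : E → α → ℝ} (hS : Convex ℝ S) (hF : ∀ w, ConvexOn ℝ S (F · w))
    (hint : ∀ p ∈ S, Integrable (F p) ν) : ConvexOn ℝ S fun p => ∫ w, F p w ∂ν := by
  refine ⟨hS, fun p hp q hq a b ha hb hab => ?_⟩
  have hp' := (hint p hp).const_mul a
  have hq' := (hint q hq).const_mul b
  calc ∫ w, F (a • p + b • q) w ∂ν ≤ ∫ w, (a * F p w + b * F q w) ∂ν :=
        integral_mono (hint _ (hS hp hq ha hb hab)) (hp'.add hq')
          fun w => (hF w).2 hp hq ha hb hab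
    _ = a • ∫ w, F p w ∂ν + b • ∫ w, F q w ∂ν := by
        rw [integral_add hp' hq', integral_const_mul, integral_const_mul]
        rfl

section TransitionOp

variable {ν : Measure ℝ} {f s g : ℝ → ℝ} {n : ℕ}

theorem HasPolyGrowth.integrable_comp_add_mul (hg : HasPolyGrowth n g) (hgm : Measurable g)
    (hν : Integrable (fun w => (1 + |w|) ^ n) ν) (α β : ℝ) :
    Integrable (fun w => g (α + β * w)) ν := by
  obtain ⟨C, -, hC⟩ := hg.abs_comp_add_mul_le
  refine (hν.const_mul (C * (1 + |α| + |β|) ^ n)).mono'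
    (hgm.comp (by fun_prop)).aestronglyMeasurable
    (ae_of_all _ fun w => ?_)
  rw [Real.norm_eq_abs, mul_assoc]
  exact hC α β w

theorem convexOn_integral_comp_add_mul (hg : ConvexOn ℝ univ g)
    (hint : ∀ α β, Integrable (fun w => g (α + β * w)) ν) :
    ConvexOn ℝ univ fun p : ℝ × ℝ => ∫ w, g (p.1 + p.2 * w) ∂ν :=
  convexOn_integral convex_univ
    (fun w => by
      have h := hg.comp_linearMap (LinearMap.fst ℝ ℝ ℝ + w • LinearMap.snd ℝ ℝ ℝ)
      rw [preimage_univ] at h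
      exact h.congr fun p _ => by simp [mul_comm])
    fun p _ => hint p.1 p.2

theorem monotoneOn_integral_comp_add_mul [ν.IsNegInvariant] (hg : ConvexOn ℝ univ g)
    (hint : ∀ α β, Integrable (fun w => g (α + β * w)) ν) (α : ℝ) :
    MonotoneOn (fun β => ∫ w, g (α + β * w) ∂ν) (Ici 0) := by
  refine ConvexOn.monotoneOn_of_even ?_ fun β => ?_
  · refine convexOn_integral convex_univ (fun w => ?_) fun β _ => hint α β
    have h := hg.comp_affineMap (AffineMap.lineMap α (α + w))
    rw [preimage_univ] at h
    exact h.congr fun β _ => by simp [AffineMap.lineMap_apply, add_comm]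
  · simpa using integral_neg_eq_self (fun w => g (α + β * w)) ν

noncomputable def transitionOp (ν : Measure ℝ) (f s g : ℝ → ℝ) (x : ℝ) : ℝ :=
  ∫ w, g (f x + s x * w) ∂ν

theorem convexOn_transitionOp [ν.IsNegInvariant] (hg : ConvexOn ℝ univ g)
    (hint : ∀ α β, Integrable (fun w => g (α + β * w)) ν) (f : ℝ →ᵃ[ℝ] ℝ)
    (hs : ConvexOn ℝ univ s) (hs0 : ∀ x, 0 ≤ s x) : ConvexOn ℝ univ (transitionOp ν f s g) := by
  refine ⟨convex_univ, fun x _ y _ a b ha hb hab => ?_⟩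
  have hjoint := (convexOn_integral_comp_add_mul hg hint).2 (mem_univ (f x, s x))
    (mem_univ (f y, s y)) ha hb hab
  calc transitionOp ν f s g (a • x + b • y)
      = ∫ w, g (a • f x + b • f y + s (a • x + b • y) * w) ∂ν := by
        rw [transitionOp, Convex.combo_affine_apply hab]
    _ ≤ ∫ w, g (a • f x + b • f y + (a • s x + b • s y) * w) ∂ν :=
        monotoneOn_integral_comp_add_mul hg hint _ (hs0 _)
          (add_nonneg (mul_nonneg ha (hs0 x)) (mul_nonneg hb (hs0 y)))
          (hs.2 (mem_univ x) (mem_univ y) ha hb hab)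
    _ ≤ a • transitionOp ν f s g x + b • transitionOp ν f s g y := hjoint

theorem hasPolyGrowth_transitionOp (hg : HasPolyGrowth n g) (hf : HasPolyGrowth 1 f)
    (hs : HasPolyGrowth 1 s) (hν : Integrable (fun w => (1 + |w|) ^ n) ν) :
    HasPolyGrowth n (transitionOp ν f s g) := by
  obtain ⟨C, hC, hCg⟩ := hg.abs_comp_add_mul_le
  obtain ⟨A, hA, hAfs⟩ := hf.exists_one_add_abs_add_abs_le hs
  have hM : 0 ≤ ∫ w, (1 + |w|) ^ n ∂ν := integral_nonneg fun w => by positivity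
  refine ⟨C * A ^ n * ∫ w, (1 + |w|) ^ n ∂ν, by positivity, fun x => ?_⟩
  calc |transitionOp ν f s g x|
      ≤ ∫ w, C * ((1 + |f x| + |s x|) ^ n * (1 + |w|) ^ n) ∂ν := by
        rw [← Real.norm_eq_abs]
        exact norm_integral_le_of_norm_le ((hν.const_mul _).const_mul _)
          (ae_of_all _ fun w => (Real.norm_eq_abs _).trans_le (hCg _ _ _))
    _ = C * (1 + |f x| + |s x|) ^ n * ∫ w, (1 + |w|) ^ n ∂ν := by
        rw [integral_const_mul, integral_const_mul, mul_assoc]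
    _ ≤ C * (A * (1 + |x|)) ^ n * ∫ w, (1 + |w|) ^ n ∂ν := by
        gcongr
        exact hAfs x
    _ = C * A ^ n * (∫ w, (1 + |w|) ^ n ∂ν) * (1 + |x|) ^ n := by rw [mul_pow]; ring

theorem measurable_transitionOp [SFinite ν] (hg : Measurable g) (hf : Measurable f)
    (hs : Measurable s) : Measurable (transitionOp ν f s g) :=
  (hg.comp ((hf.comp measurable_fst).add ((hs.comp measurable_fst).mul measurable_snd))
    ).stronglyMeasurable.integral_prod_right'.measurable

theorem convexOn_iterate_transitionOp [ν.IsNegInvariant]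
    (hν : Integrable (fun w => (1 + |w|) ^ n) ν) (f : ℝ →ᵃ[ℝ] ℝ)
    (hs : ConvexOn ℝ univ s) (hs0 : ∀ x, 0 ≤ s x) (hsg : HasPolyGrowth 1 s)
    (hg : ConvexOn ℝ univ g) (hgg : HasPolyGrowth n g) (j : ℕ) :
    ConvexOn ℝ univ ((transitionOp ν f s)^[j] g) :=
  (Iterate.rec (fun h => ConvexOn ℝ univ h ∧ HasPolyGrowth n h) ⟨hg, hgg⟩
    (fun _ ⟨hh, hhg⟩ =>
      ⟨convexOn_transitionOp hh
          (hhg.integrable_comp_add_mul hh.continuous_of_univ.measurable hν) f hs hs0,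
        hasPolyGrowth_transitionOp hhg f.hasPolyGrowth_one hsg hν⟩) j).1

end TransitionOp

section NoiseRecursion

variable {Ω : Type*} {f s g : ℝ → ℝ} {n K : ℕ}

abbrev noisePast (W : Fin K → Ω → ℝ) (j : ℕ) : MeasurableSpace Ω :=
  ⨆ i ∈ {i : Fin K | (i : ℕ) < j}, MeasurableSpace.comap (W i) inferInstance

structure IsNoiseRecursion (W : Fin K → Ω → ℝ) (f s : ℝ → ℝ) (x : ℝ) (Z : ℕ → Ω → ℝ) :
    Prop where
  zero : ∀ ω, Z 0 ω = x
  succ : ∀ (j : Fin K) ω, Z (j + 1) ω = f (Z j ω) + s (Z j ω) * W j ω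

theorem noisePast_mono (W : Fin K → Ω → ℝ) {j j' : ℕ} (h : j ≤ j') :
    noisePast W j ≤ noisePast W j' :=
  biSup_mono fun _ hi => lt_of_lt_of_le hi h

theorem comap_le_noisePast (W : Fin K → Ω → ℝ) {i : Fin K} {j : ℕ} (hi : (i : ℕ) < j) :
    MeasurableSpace.comap (W i) inferInstance ≤ noisePast W j :=
  le_biSup (fun i : Fin K => MeasurableSpace.comap (W i) inferInstance)
    (s := {i : Fin K | (i : ℕ) < j}) hi

theorem IsNoiseRecursion.measurable_noisePast {W : Fin K → Ω → ℝ} {x : ℝ} {Z : ℕ → Ω → ℝ}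
    (hZ : IsNoiseRecursion W f s x Z) (hfm : Measurable f) (hsm : Measurable s) {j : ℕ}
    (hj : j ≤ K) : Measurable[noisePast W j] (Z j) := by
  induction j with
  | zero =>
    rw [show Z 0 = fun _ => x from funext hZ.zero]
    exact measurable_const
  | succ j ih =>
    have hZj : Measurable[noisePast W (j + 1)] (Z j) :=
      (ih (by omega)).mono (noisePast_mono W j.le_succ) le_rfl
    have hWj : Measurable[noisePast W (j + 1)] (W ⟨j, hj⟩) :=
      (comap_measurable _).mono (comap_le_noisePast W (Nat.lt_succ_self j)) le_rfl
    rw [show Z (j + 1) = fun ω => f (Z j ω) + s (Z j ω) * W ⟨j, hj⟩ ω from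
      funext (hZ.succ ⟨j, hj⟩)]
    exact (hfm.comp hZj).add ((hsm.comp hZj).mul hWj)

variable [MeasurableSpace Ω] {P : Measure Ω} {ν : Measure ℝ}

theorem noisePast_le {W : Fin K → Ω → ℝ} (hWm : ∀ k, Measurable (W k)) (j : ℕ) :
    noisePast W j ≤ ‹MeasurableSpace Ω› :=
  iSup₂_le fun i _ => (hWm i).comap_le

theorem ProbabilityTheory.HasLaw.integrable_comp {𝓧 : Type*} [MeasurableSpace 𝓧] {μ : Measure 𝓧}
    {X : Ω → 𝓧} (hX : HasLaw X μ P) {h : 𝓧 → ℝ} (hh : Integrable h μ) : Integrable (h ∘ X) P := by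
  rw [← hX.map_eq] at hh
  exact hh.comp_aemeasurable hX.aemeasurable

theorem integrable_comp_add_mul_of_indepFun {X W : Ω → ℝ} (hXW : IndepFun X W P)
    (hX : AEMeasurable X P) (hW : AEMeasurable W P) (hgm : Measurable g) (hg : HasPolyGrowth n g)
    (hfm : Measurable f) (hsm : Measurable s) (hf : HasPolyGrowth 1 f) (hs : HasPolyGrowth 1 s)
    (hXn : Integrable (fun ω => (1 + |X ω|) ^ n) P)
    (hWn : Integrable (fun ω => (1 + |W ω|) ^ n) P) :
    Integrable (fun ω => g (f (X ω) + s (X ω) * W ω)) P := by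
  obtain ⟨C, hC, hCg⟩ := hg.abs_comp_add_mul_le
  obtain ⟨A, hA, hAfs⟩ := hf.exists_one_add_abs_add_abs_le hs
  have hmom : Measurable fun z : ℝ => (1 + |z|) ^ n := by fun_prop
  have hprod : Integrable (fun ω => (1 + |X ω|) ^ n * (1 + |W ω|) ^ n) P :=
    (hXW.comp hmom hmom).integrable_mul hXn hWn
  refine (hprod.const_mul (C * A ^ n)).mono'
    (hgm.comp_aemeasurable (by fun_prop)).aestronglyMeasurable (ae_of_all _ fun ω => ?_)
  rw [Real.norm_eq_abs]
  calc |g (f (X ω) + s (X ω) * W ω)|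
      ≤ C * ((1 + |f (X ω)| + |s (X ω)|) ^ n * (1 + |W ω|) ^ n) := hCg _ _ _
    _ ≤ C * ((A * (1 + |X ω|)) ^ n * (1 + |W ω|) ^ n) := by
        gcongr
        exact hAfs _
    _ = C * A ^ n * ((1 + |X ω|) ^ n * (1 + |W ω|) ^ n) := by rw [mul_pow]; ring

theorem integral_comp_add_mul_eq_integral_transitionOp [IsFiniteMeasure P] {X W : Ω → ℝ}
    (hXW : IndepFun X W P) (hX : Measurable X) (hW : HasLaw W ν P) (hgm : Measurable g)
    (hfm : Measurable f) (hsm : Measurable s)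
    (hint : Integrable (fun ω => g (f (X ω) + s (X ω) * W ω)) P) :
    ∫ ω, g (f (X ω) + s (X ω) * W ω) ∂P = ∫ ω, transitionOp ν f s g (X ω) ∂P := by
  have : IsFiniteMeasure ν := hW.map_eq ▸ inferInstance
  have hpair : HasLaw (fun ω => (X ω, W ω)) ((P.map X).prod ν) P :=
    (indepFun_iff_hasLaw_prodMk_prod ⟨hX.aemeasurable, rfl⟩ hW).1 hXW
  have hF : Measurable fun p : ℝ × ℝ => g (f p.1 + s p.1 * p.2) := by fun_prop
  have hFint : Integrable (fun p : ℝ × ℝ => g (f p.1 + s p.1 * p.2)) ((P.map X).prod ν) := by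
    rw [← hpair.map_eq]
    exact (integrable_map_measure hF.aestronglyMeasurable hpair.aemeasurable).2 hint
  calc ∫ ω, g (f (X ω) + s (X ω) * W ω) ∂P
      = ∫ p, g (f p.1 + s p.1 * p.2) ∂((P.map X).prod ν) :=
        hpair.integral_comp hF.aestronglyMeasurable
    _ = ∫ z, transitionOp ν f s g z ∂(P.map X) := integral_prod _ hFint
    _ = ∫ ω, transitionOp ν f s g (X ω) ∂P :=
        integral_map hX.aemeasurable (measurable_transitionOp hgm hfm hsm).aestronglyMeasurable

namespace IsNoiseRecursion

variable {W : Fin K → Ω → ℝ} {x : ℝ} {Z : ℕ → Ω → ℝ}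

theorem measurable (hZ : IsNoiseRecursion W f s x Z) (hfm : Measurable f) (hsm : Measurable s)
    (hWm : ∀ k, Measurable (W k)) {j : ℕ} (hj : j ≤ K) : Measurable (Z j) :=
  (hZ.measurable_noisePast hfm hsm hj).mono (noisePast_le hWm j) le_rfl

theorem indepFun (hZ : IsNoiseRecursion W f s x Z) (hfm : Measurable f) (hsm : Measurable s)
    (hWm : ∀ k, Measurable (W k)) (hindep : iIndepFun W P) (j : Fin K) :
    IndepFun (Z j) (W j) P := by
  have h := indep_iSup_of_disjoint (fun k => (hWm k).comap_le)
    ((iIndepFun_iff_iIndep _ W P).1 hindep)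
    (S := {i : Fin K | (i : ℕ) < j}) (T := {j})
    (disjoint_singleton_right.2 (lt_irrefl (j : ℕ)))
  rw [IndepFun_iff_Indep]
  exact indep_of_indep_of_le h (hZ.measurable_noisePast hfm hsm j.isLt.le).comap_le
    (le_biSup (fun i => MeasurableSpace.comap (W i) inferInstance) (mem_singleton j))

theorem integrable_one_add_abs_pow [IsFiniteMeasure P] (hZ : IsNoiseRecursion W f s x Z)
    (hfm : Measurable f) (hsm : Measurable s) (hf : HasPolyGrowth 1 f) (hs : HasPolyGrowth 1 s)
    (hWm : ∀ k, Measurable (W k)) (hindep : iIndepFun W P) (hlaw : ∀ k, HasLaw (W k) ν P)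
    (hν : Integrable (fun w => (1 + |w|) ^ n) ν) {j : ℕ} (hj : j ≤ K) :
    Integrable (fun ω => (1 + |Z j ω|) ^ n) P := by
  induction j with
  | zero => simp [hZ.zero]
  | succ j ih =>
    have hjK : j < K := hj
    let k : Fin K := ⟨j, hjK⟩
    have hX := hZ.measurable hfm hsm hWm hjK.le
    refine (integrable_comp_add_mul_of_indepFun (hZ.indepFun hfm hsm hWm hindep k)
      hX.aemeasurable (hWm k).aemeasurable (by fun_prop) (hasPolyGrowth_one_add_abs_pow n)
      hfm hsm hf hs (ih hjK.le) ((hlaw k).integrable_comp hν)).congr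
      (ae_of_all _ fun ω => congrArg (fun z => (1 + |z|) ^ n) (hZ.succ k ω).symm)

theorem integral_comp_eq_iterate_transitionOp [IsProbabilityMeasure P]
    (hZ : IsNoiseRecursion W f s x Z) (hfm : Measurable f) (hsm : Measurable s)
    (hf : HasPolyGrowth 1 f) (hs : HasPolyGrowth 1 s) (hWm : ∀ k, Measurable (W k))
    (hindep : iIndepFun W P) (hlaw : ∀ k, HasLaw (W k) ν P)
    (hν : Integrable (fun w => (1 + |w|) ^ n) ν) {j : ℕ} (hj : j ≤ K) (hgm : Measurable g)
    (hg : HasPolyGrowth n g) : ∫ ω, g (Z j ω) ∂P = (transitionOp ν f s)^[j] g x := by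
  induction j generalizing g with
  | zero => simp [hZ.zero]
  | succ j ih =>
    have hjK : j < K := hj
    let k : Fin K := ⟨j, hjK⟩
    have : IsFiniteMeasure ν := (hlaw k).map_eq ▸ inferInstance
    have hXW := hZ.indepFun hfm hsm hWm hindep k
    have hX := hZ.measurable hfm hsm hWm hjK.le
    have hint := integrable_comp_add_mul_of_indepFun hXW hX.aemeasurable (hWm k).aemeasurable
      hgm hg hfm hsm hf hs (hZ.integrable_one_add_abs_pow hfm hsm hf hs hWm hindep hlaw hν
        hjK.le) ((hlaw k).integrable_comp hν)
    calc ∫ ω, g (Z (j + 1) ω) ∂P = ∫ ω, g (f (Z j ω) + s (Z j ω) * W k ω) ∂P :=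
          integral_congr_ae (ae_of_all _ fun ω => congrArg g (hZ.succ k ω))
      _ = ∫ ω, transitionOp ν f s g (Z j ω) ∂P :=
          integral_comp_add_mul_eq_integral_transitionOp hXW hX (hlaw k) hgm hfm hsm hint
      _ = (transitionOp ν f s)^[j + 1] g x :=
          ih hjK.le (measurable_transitionOp hgm hfm hsm)
            (hasPolyGrowth_transitionOp hg hf hs hν)

end IsNoiseRecursion

end NoiseRecursion

theorem euler_maruyama_propagation_of_convexity_general {Ω : Type*} [MeasureSpace Ω]
    [IsProbabilityMeasure (ℙ : Measure Ω)]
    (θ a Δ μ : ℝ) (hθ : 0 < θ) (ha : 0 < a)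
    (K : ℕ)
    (W : Fin K → Ω → ℝ)
    (hWmeas : ∀ k, Measurable (W k))
    -- `W₀, …, W_{K−1}` are independent …
    (hindep : iIndepFun W ℙ)
    -- … centered Gaussians, each with variance `Δ`
    (hgauss : ∀ k, Measure.map (W k) ℙ = gaussianReal 0 Δ.toNNReal)
    -- the Euler–Maruyama iterates started at `x`
    (Z : ℕ → ℝ → Ω → ℝ)
    (hZ0 : ∀ (x : ℝ) (ω : Ω), Z 0 x ω = x)
    (hZrec : ∀ (j : Fin K) (x : ℝ) (ω : Ω),
      Z (j + 1) x ω = Z j x ω - Δ * θ * (Z j x ω - μ) +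
        Real.sqrt (2 * θ * a * ((Z j x ω) ^ 2 + 1)) * W j ω) :
    -- for every convex `g` of polynomial growth, `x ↦ E[g(Z_K(x))]` is convex
    ∀ g : ℝ → ℝ, ConvexOn ℝ Set.univ g →
      (∃ C m : ℝ, ∀ z : ℝ, |g z| ≤ C * (1 + |z| ^ m)) →
      ConvexOn ℝ Set.univ (fun x : ℝ => ∫ ω, g (Z K x ω) ∂ℙ) := by
  rintro g hg ⟨C, m, hgm⟩
  have hgg := hasPolyGrowth_of_abs_le_rpow hg.continuous_of_univ hgm
  have hc : 0 ≤ 2 * θ * a := by positivity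
  have hν := integrable_one_add_abs_pow_gaussianReal 0 Δ.toNNReal
  let drift : ℝ →ᵃ[ℝ] ℝ := AffineMap.homothety μ (1 - Δ * θ)
  let diffusion : ℝ → ℝ := fun z => √(2 * θ * a * (z ^ 2 + 1))
  have hZ (x : ℝ) : IsNoiseRecursion W drift diffusion x (Z · x) :=
    ⟨hZ0 x, fun j ω => by
      rw [hZrec, AffineMap.homothety_apply, vsub_eq_sub, vadd_eq_add, smul_eq_mul]
      ring⟩
  have hexp : (fun x => ∫ ω, g (Z K x ω)) =
      (transitionOp (gaussianReal 0 Δ.toNNReal) drift diffusion)^[K] g := funext fun x =>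
    (hZ x).integral_comp_eq_iterate_transitionOp drift.continuous_of_finiteDimensional.measurable
      (by fun_prop) drift.hasPolyGrowth_one (hasPolyGrowth_sqrt_mul_sq_add_one hc) hWmeas hindep
      (fun k => ⟨(hWmeas k).aemeasurable, hgauss k⟩) (hν _) le_rfl
      hg.continuous_of_univ.measurable hgg
  rw [hexp]
  exact convexOn_iterate_transitionOp (hν _) drift (convexOn_sqrt_mul_sq_add_one hc)
    (fun _ => Real.sqrt_nonneg _) (hasPolyGrowth_sqrt_mul_sq_add_one hc) hg hgg K

theorem euler_maruyama_propagation_of_convexity {Ω : Type*} [MeasureSpace Ω]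
    [IsProbabilityMeasure (ℙ : Measure Ω)]
    (θ a Δ μ : ℝ) (hθ : 0 < θ) (ha : 0 < a) (hΔ : 0 < Δ)
    (K : ℕ)
    (W : Fin K → Ω → ℝ)
    (hWmeas : ∀ k, Measurable (W k))
    -- `W₀, …, W_{K−1}` are independent …
    (hindep : iIndepFun W ℙ)
    -- … centered Gaussians, each with variance `Δ`
    (hgauss : ∀ k, Measure.map (W k) ℙ = gaussianReal 0 Δ.toNNReal)
    -- the Euler–Maruyama iterates started at `x`
    (Z : ℕ → ℝ → Ω → ℝ)
    (hZ0 : ∀ (x : ℝ) (ω : Ω), Z 0 x ω = x)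
    (hZrec : ∀ (j : Fin K) (x : ℝ) (ω : Ω),
      Z (j + 1) x ω = Z j x ω - Δ * θ * (Z j x ω - μ) +
        Real.sqrt (2 * θ * a * ((Z j x ω) ^ 2 + 1)) * W j ω) :
    -- for every convex `g` of polynomial growth, `x ↦ E[g(Z_K(x))]` is convex
    ∀ g : ℝ → ℝ, ConvexOn ℝ Set.univ g →
      (∃ C m : ℝ, ∀ z : ℝ, |g z| ≤ C * (1 + |z| ^ m)) →
      ConvexOn ℝ Set.univ (fun x : ℝ => ∫ ω, g (Z K x ω) ∂ℙ) :=
  euler_maruyama_propagation_of_convexity_general θ a Δ μ hθ ha K W hWmeas hindep hgauss Z hZ0 hZrec
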